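/- arXiv:2402.01951 — 4 statements merged into one kernel-verified Lean document; each statement's English description precedes it below -/
import Mathlib

section
/- Under Assumption 1, the map (z, κ, λ) ↦ D(z, κ, λ, ℙ) is jointly continuous on ℝ × Λ∞ × Λ∞, where ℝ carries the Euclidean topology and Λ∞ the topology induced by the ℓ¹ norm. -/
/-!
Since `x ↦ x₊` is 1-Lipschitz and `E|∑ δ_i X_i| ≤ (sup_i E|X_i|) ‖δ‖₁` (exchange sum and
integral for the nonnegative series `∑ |δ_i X_i|`), the lower partial moment
`(z, κ) ↦ E[(z - ∑ κ_i X_i)₊]` is Lipschitz on all of `ℝ × ℓ¹`.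
The differential `D` is a difference of two such maps.
-/

open MeasureTheory ENNReal NNReal

section SeriesOfFunctions

variable {α E ι : Type*} [MeasurableSpace α] {μ : Measure α} [NormedAddCommGroup E] [Countable ι]
  {f : ι → α → E}

-- No summability is needed: a non-summable `∑'` is `0`.
theorem lintegral_enorm_tsum_le (hf : ∀ i, AEStronglyMeasurable (f i) μ) :
    ∫⁻ a, ‖∑' i, f i a‖ₑ ∂μ ≤ ∑' i, ∫⁻ a, ‖f i a‖ₑ ∂μ :=
  (lintegral_mono fun _ => enorm_tsum_le_tsum_enorm).trans_eq
    (lintegral_tsum fun i => (hf i).enorm)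

theorem integrable_tsum_of_tsum_lintegral_enorm_ne_top [CompleteSpace E]
    (hf : ∀ i, AEStronglyMeasurable (f i) μ) (h : ∑' i, ∫⁻ a, ‖f i a‖ₑ ∂μ ≠ ∞) :
    Integrable (fun a => ∑' i, f i a) μ :=
  ⟨.tsum hf, (lintegral_enorm_tsum_le hf).trans_lt h.lt_top⟩

theorem ae_summable_of_tsum_lintegral_enorm_ne_top [CompleteSpace E]
    (hf : ∀ i, AEStronglyMeasurable (f i) μ) (h : ∑' i, ∫⁻ a, ‖f i a‖ₑ ∂μ ≠ ∞) :
    ∀ᵐ a ∂μ, Summable fun i => f i a := by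
  have h₁ : ∑' i, eLpNorm (f i) 1 μ ≠ ∞ := by simpa only [eLpNorm_one_eq_lintegral_enorm] using h
  filter_upwards [summable_norm_of_tsum_eLpNorm_ne_top le_rfl hf h₁] with a ha using ha.of_norm

end SeriesOfFunctions

theorem lp.summable_abs_of_one (κ : lp (fun _ : ℕ => ℝ) 1) : Summable fun i => |κ i| := by
  simpa using (lp.memℓp κ).summable (p := 1) (by norm_num)

theorem lp.norm_eq_tsum_abs_of_one (κ : lp (fun _ : ℕ => ℝ) 1) : ‖κ‖ = ∑' i, |κ i| := by
  simpa using lp.norm_eq_tsum_rpow (p := 1) (by norm_num) κ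

section LinearCombination

variable {Ω : Type*} [MeasurableSpace Ω] {μ : Measure Ω} {X : ℕ → Ω → ℝ} {M : ℝ≥0}

theorem tsum_lintegral_enorm_mul_le (hX : ∀ i, Integrable (X i) μ)
    (hM : ∀ i, ∫ ω, |X i ω| ∂μ ≤ M) (κ : lp (fun _ : ℕ => ℝ) 1) :
    ∑' i, ∫⁻ ω, ‖κ i * X i ω‖ₑ ∂μ ≤ ENNReal.ofReal (M * ‖κ‖) := by
  have hterm (i : ℕ) : ∫⁻ ω, ‖κ i * X i ω‖ₑ ∂μ ≤ ENNReal.ofReal (|κ i| * M) := by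
    rw [← ofReal_integral_norm_eq_lintegral_enorm ((hX i).const_mul (κ i))]
    refine ENNReal.ofReal_le_ofReal ?_
    simp only [norm_mul, Real.norm_eq_abs, integral_const_mul]
    exact mul_le_mul_of_nonneg_left (hM i) (abs_nonneg _)
  calc ∑' i, ∫⁻ ω, ‖κ i * X i ω‖ₑ ∂μ ≤ ∑' i, ENNReal.ofReal (|κ i| * M) :=
        ENNReal.tsum_le_tsum hterm
    _ = ENNReal.ofReal (M * ‖κ‖) := by
        rw [← ENNReal.ofReal_tsum_of_nonneg (fun i => by positivity)
          ((lp.summable_abs_of_one κ).mul_right _), lp.norm_eq_tsum_abs_of_one, mul_comm]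
        exact congrArg ENNReal.ofReal tsum_mul_right

theorem tsum_lintegral_enorm_mul_ne_top (hX : ∀ i, Integrable (X i) μ)
    (hM : ∀ i, ∫ ω, |X i ω| ∂μ ≤ M) (κ : lp (fun _ : ℕ => ℝ) 1) :
    ∑' i, ∫⁻ ω, ‖κ i * X i ω‖ₑ ∂μ ≠ ∞ :=
  ne_top_of_le_ne_top ofReal_ne_top (tsum_lintegral_enorm_mul_le hX hM κ)

theorem integrable_tsum_mul (hX : ∀ i, Integrable (X i) μ) (hM : ∀ i, ∫ ω, |X i ω| ∂μ ≤ M)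
    (κ : lp (fun _ : ℕ => ℝ) 1) : Integrable (fun ω => ∑' i, κ i * X i ω) μ :=
  integrable_tsum_of_tsum_lintegral_enorm_ne_top (fun i => ((hX i).const_mul _).1)
    (tsum_lintegral_enorm_mul_ne_top hX hM κ)

theorem integral_abs_tsum_mul_le (hX : ∀ i, Integrable (X i) μ)
    (hM : ∀ i, ∫ ω, |X i ω| ∂μ ≤ M) (κ : lp (fun _ : ℕ => ℝ) 1) :
    ∫ ω, |∑' i, κ i * X i ω| ∂μ ≤ M * ‖κ‖ := by
  simp only [← Real.norm_eq_abs]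
  rw [integral_norm_eq_lintegral_enorm (integrable_tsum_mul hX hM κ).1]
  exact ENNReal.toReal_le_of_le_ofReal (by positivity)
    ((lintegral_enorm_tsum_le fun i => ((hX i).const_mul _).1).trans
      (tsum_lintegral_enorm_mul_le hX hM κ))

theorem ae_tsum_mul_sub (hX : ∀ i, Integrable (X i) μ) (hM : ∀ i, ∫ ω, |X i ω| ∂μ ≤ M)
    (κ l : lp (fun _ : ℕ => ℝ) 1) :
    ∀ᵐ ω ∂μ, ∑' i, (κ - l) i * X i ω = ∑' i, κ i * X i ω - ∑' i, l i * X i ω := by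
  have hsum (κ : lp (fun _ : ℕ => ℝ) 1) : ∀ᵐ ω ∂μ, Summable fun i => κ i * X i ω :=
    ae_summable_of_tsum_lintegral_enorm_ne_top (fun i => ((hX i).const_mul _).1)
      (tsum_lintegral_enorm_mul_ne_top hX hM κ)
  filter_upwards [hsum κ, hsum l] with ω hκ hl
  simp only [lp.coeFn_sub, Pi.sub_apply, sub_mul]
  exact hκ.tsum_sub hl

end LinearCombination

noncomputable def lowerPartialMoment {Ω : Type*} [MeasurableSpace Ω] (μ : Measure Ω)
    (X : ℕ → Ω → ℝ) (z : ℝ) (κ : ℕ → ℝ) : ℝ :=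
  ∫ ω, max (z - ∑' i, κ i * X i ω) 0 ∂μ

section LowerPartialMoment

variable {Ω : Type*} [MeasurableSpace Ω] {μ : Measure Ω} [IsProbabilityMeasure μ]
  {X : ℕ → Ω → ℝ} {M : ℝ≥0}

theorem lipschitzWith_lowerPartialMoment (hX : ∀ i, Integrable (X i) μ)
    (hM : ∀ i, ∫ ω, |X i ω| ∂μ ≤ M) :
    LipschitzWith (1 + M)
      fun p : ℝ × lp (fun _ : ℕ => ℝ) 1 => lowerPartialMoment μ X p.1 p.2 := by
  refine LipschitzWith.of_dist_le_mul fun ⟨z, κ⟩ ⟨z', l⟩ => ?_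
  have hint (z : ℝ) (κ : lp (fun _ : ℕ => ℝ) 1) :
      Integrable (fun ω => max (z - ∑' i, κ i * X i ω) 0) μ :=
    ((integrable_const z).sub (integrable_tsum_mul hX hM κ)).pos_part
  have hpointwise : ∀ᵐ ω ∂μ, ‖max (z - ∑' i, κ i * X i ω) 0 - max (z' - ∑' i, l i * X i ω) 0‖
      ≤ |z - z'| + |∑' i, (κ - l) i * X i ω| := by
    filter_upwards [ae_tsum_mul_sub hX hM κ l] with ω hsub
    rw [Real.norm_eq_abs, hsub]
    refine (abs_max_sub_max_le_abs _ _ _).trans ?_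
    rw [sub_sub_sub_comm]
    exact abs_sub _ _
  calc dist (lowerPartialMoment μ X z κ) (lowerPartialMoment μ X z' l)
      = ‖∫ ω, (max (z - ∑' i, κ i * X i ω) 0 - max (z' - ∑' i, l i * X i ω) 0) ∂μ‖ := by
        rw [dist_eq_norm, lowerPartialMoment, lowerPartialMoment,
          integral_sub (hint z κ) (hint z' l)]
    _ ≤ ∫ ω, (|z - z'| + |∑' i, (κ - l) i * X i ω|) ∂μ :=
        norm_integral_le_of_norm_le ((integrable_const _).add
          (integrable_tsum_mul hX hM (κ - l)).abs) hpointwise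
    _ = |z - z'| + ∫ ω, |∑' i, (κ - l) i * X i ω| ∂μ := by
        rw [integral_add (integrable_const _) (integrable_tsum_mul hX hM (κ - l)).abs]
        simp
    _ ≤ |z - z'| + M * ‖κ - l‖ := by gcongr; exact integral_abs_tsum_mul_le hX hM (κ - l)
    _ ≤ (1 + M) * dist (z, κ) (z', l) := by
        rw [Prod.dist_eq, Real.dist_eq, dist_eq_norm]
        push_cast
        nlinarith [le_max_left |z - z'| ‖κ - l‖, le_max_right |z - z'| ‖κ - l‖, M.2]

end LowerPartialMoment

theorem sparse_ssd_stmt2_general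
    {Ω : Type*} [MeasurableSpace Ω] (ℙ : Measure Ω) [IsProbabilityMeasure ℙ]
    (X : ℕ → Ω → ℝ)
    (hXint : ∀ i, Integrable (X i) ℙ)
    (hbdd : BddAbove (Set.range fun i => ∫ ω, |X i ω| ∂ℙ)) :
    ContinuousOn
      (fun t : ℝ × lp (fun _ : ℕ => ℝ) 1 × lp (fun _ : ℕ => ℝ) 1 =>
        (∫ ω, max (t.1 - ∑' i, t.2.1 i * X i ω) 0 ∂ℙ) -
          ∫ ω, max (t.1 - ∑' i, t.2.2 i * X i ω) 0 ∂ℙ)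
      (Set.univ ×ˢ
        ({f : lp (fun _ : ℕ => ℝ) 1 | (∀ i, 0 ≤ f i) ∧ ∑' i, f i = 1} ×ˢ
          {f : lp (fun _ : ℕ => ℝ) 1 | (∀ i, 0 ≤ f i) ∧ ∑' i, f i = 1})) := by
  obtain ⟨M, hM⟩ := hbdd
  have hXbdd (i : ℕ) : ∫ ω, |X i ω| ∂ℙ ≤ M.toNNReal :=
    (hM ⟨i, rfl⟩).trans (Real.le_coe_toNNReal M)
  have hG := (lipschitzWith_lowerPartialMoment hXint hXbdd).continuous
  exact ((hG.comp (continuous_fst.prodMk continuous_snd.fst)).sub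
    (hG.comp (continuous_fst.prodMk continuous_snd.snd))).continuousOn

/-- Under Assumption 1, the lower partial moment differential
`(z, κ, λ) ↦ D(z, κ, λ, ℙ)` is jointly continuous on `ℝ × Λ∞ × Λ∞`, where the
ℕ-simplex `Λ∞` carries the topology induced by the ℓ¹ norm. -/
theorem sparse_ssd_stmt2
    {Ω : Type*} [MeasurableSpace Ω] (ℙ : Measure Ω) [IsProbabilityMeasure ℙ]
    (X : ℕ → Ω → ℝ) (hXmeas : ∀ i, Measurable (X i))
    (hXint : ∀ i, Integrable (X i) ℙ)
    (hbdd : BddAbove (Set.range fun i => ∫ ω, |X i ω| ∂ℙ)) :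
    ContinuousOn
      (fun t : ℝ × lp (fun _ : ℕ => ℝ) 1 × lp (fun _ : ℕ => ℝ) 1 =>
        (∫ ω, max (t.1 - ∑' i, t.2.1 i * X i ω) 0 ∂ℙ) -
          ∫ ω, max (t.1 - ∑' i, t.2.2 i * X i ω) 0 ∂ℙ)
      (Set.univ ×ˢ
        ({f : lp (fun _ : ℕ => ℝ) 1 | (∀ i, 0 ≤ f i) ∧ ∑' i, f i = 1} ×ˢ
          {f : lp (fun _ : ℕ => ℝ) 1 | (∀ i, 0 ≤ f i) ∧ ∑' i, f i = 1})) :=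
  sparse_ssd_stmt2_general ℙ X hXint hbdd
end

section
/- (Lemma 1.) Under the stated assumptions, K second-order stochastically dominance spans Λ, i.e. K ⪰_SSD Λ, if and only if sup_{λ ∈ Λ} inf_{κ ∈ K} sup_{z ∈ Z} D(z, κ, λ, ℙ) ≤ 0. -/
open MeasureTheory

/-- The lower partial moment differential (LPMD) for portfolios on `p` base assets:
`D(z, κ, λ, ℙ) = E[(z − κᵀX)₊] − E[(z − λᵀX)₊]`. -/
noncomputable def LPMD {Ω : Type*} [MeasurableSpace Ω] (ℙ : Measure Ω) {p : ℕ}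
    (X : Ω → Fin p → ℝ) (z : ℝ) (k l : Fin p → ℝ) : ℝ :=
  (∫ ω, max (z - ∑ i, k i * X ω i) 0 ∂ℙ) - ∫ ω, max (z - ∑ i, l i * X ω i) 0 ∂ℙ

/-- The (topological) support of a Borel measure on `ℝ`. -/
def measSupport (μ : Measure ℝ) : Set ℝ := {x : ℝ | ∀ U ∈ nhds x, 0 < μ U}

/-!
Since `t ↦ (z - t)₊` is 1-Lipschitz, `|D(z, κ, λ)| ≤ ‖κ - λ‖_∞ · Σᵢ E|X⁽ⁱ⁾|` uniformly in `z`.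
Hence `κ ↦ sup_{z ∈ Z} D(z, κ, λ)` is a finite Lipschitz function, which attains its infimum on
the compact set `K`; a minimiser is a dominating portfolio as soon as that infimum is `≤ 0`.
-/

open Set Metric Bornology

lemma LipschitzWith.ciSup {α ι : Type*} [PseudoMetricSpace α] {f : ι → α → ℝ} {K : NNReal}
    (hf : ∀ i, LipschitzWith K (f i)) (hbdd : ∀ x, BddAbove (range fun i => f i x)) :
    LipschitzWith K fun x => ⨆ i, f i x := by
  refine LipschitzWith.of_le_add_mul K fun x y => ?_
  rcases isEmpty_or_nonempty ι with _ | _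
  · simp only [Real.iSup_of_isEmpty, zero_add]
    positivity
  · exact ciSup_le fun i =>
      ((hf i).le_add_mul x y).trans (add_le_add_left (le_ciSup (hbdd y) i) _)

section LPMD

variable {Ω : Type*} [MeasurableSpace Ω] {μ : Measure Ω} {p : ℕ} {X : Ω → Fin p → ℝ}

lemma abs_integral_posPart_sub_sub_le [IsFiniteMeasure μ] {Y Y' : Ω → ℝ}
    (hY : Integrable Y μ) (hY' : Integrable Y' μ) (z : ℝ) :
    |(∫ ω, max (z - Y ω) 0 ∂μ) - ∫ ω, max (z - Y' ω) 0 ∂μ| ≤ ∫ ω, |Y ω - Y' ω| ∂μ := by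
  have hpos : ∀ {V : Ω → ℝ}, Integrable V μ → Integrable (fun ω => max (z - V ω) 0) μ :=
    fun hV => ((integrable_const z).sub hV).pos_part
  rw [← integral_sub (hpos hY) (hpos hY')]
  refine abs_integral_le_integral_abs.trans (integral_mono ((hpos hY).sub (hpos hY')).abs
    (hY.sub hY').abs fun ω => ?_)
  calc |max (z - Y ω) 0 - max (z - Y' ω) 0| ≤ |(z - Y ω) - (z - Y' ω)| :=
        abs_max_sub_max_le_abs _ _ _
    _ = |Y ω - Y' ω| := by rw [sub_sub_sub_cancel_left, abs_sub_comm]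

lemma integral_abs_sum_mul_sub_sum_mul_le (hX : ∀ i, Integrable (fun ω => X ω i) μ)
    (k l : Fin p → ℝ) :
    ∫ ω, |∑ i, k i * X ω i - ∑ i, l i * X ω i| ∂μ ≤ dist k l * ∑ i, ∫ ω, |X ω i| ∂μ := by
  have hsum : Integrable (fun ω => ∑ i, |X ω i|) μ := integrable_finsetSum _ fun i _ => (hX i).abs
  have hpt : ∀ ω, |∑ i, k i * X ω i - ∑ i, l i * X ω i| ≤ dist k l * ∑ i, |X ω i| := fun ω =>
    calc |∑ i, k i * X ω i - ∑ i, l i * X ω i| = |∑ i, (k i - l i) * X ω i| := by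
          simp only [sub_mul, Finset.sum_sub_distrib]
      _ ≤ ∑ i, |(k i - l i) * X ω i| := Finset.abs_sum_le_sum_abs _ _
      _ ≤ ∑ i, dist k l * |X ω i| := Finset.sum_le_sum fun i _ => by
          rw [abs_mul, ← Real.dist_eq]
          exact mul_le_mul_of_nonneg_right (dist_le_pi_dist k l i) (abs_nonneg _)
      _ = dist k l * ∑ i, |X ω i| := (Finset.mul_sum _ _ _).symm
  calc ∫ ω, |∑ i, k i * X ω i - ∑ i, l i * X ω i| ∂μ ≤ ∫ ω, dist k l * ∑ i, |X ω i| ∂μ :=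
        integral_mono_of_nonneg (.of_forall fun _ => abs_nonneg _) (hsum.const_mul _)
          (.of_forall hpt)
    _ = dist k l * ∑ i, ∫ ω, |X ω i| ∂μ := by
        rw [integral_const_mul, integral_finsetSum _ fun i _ => (hX i).abs]

lemma LPMD_sub_LPMD (z : ℝ) (k k' l : Fin p → ℝ) :
    LPMD μ X z k l - LPMD μ X z k' l = LPMD μ X z k k' := by
  unfold LPMD
  ring

variable [IsFiniteMeasure μ]

lemma abs_LPMD_le (hX : ∀ i, Integrable (fun ω => X ω i) μ) (z : ℝ) (k l : Fin p → ℝ) :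
    |LPMD μ X z k l| ≤ (∑ i, ∫ ω, |X ω i| ∂μ) * dist k l := by
  have hport : ∀ k : Fin p → ℝ, Integrable (fun ω => ∑ i, k i * X ω i) μ :=
    fun k => integrable_finsetSum _ fun i _ => (hX i).const_mul (k i)
  rw [mul_comm]
  exact (abs_integral_posPart_sub_sub_le (hport k) (hport l) z).trans
    (integral_abs_sum_mul_sub_sum_mul_le hX k l)

variable (hX : ∀ i, Integrable (fun ω => X ω i) μ) (Z : Set ℝ)
include hX

lemma iSup_LPMD_le (k l : Fin p → ℝ) :
    ⨆ z : Z, LPMD μ X z k l ≤ (∑ i, ∫ ω, |X ω i| ∂μ) * dist k l :=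
  Real.iSup_le (fun z => (le_abs_self _).trans (abs_LPMD_le hX z k l))
    (mul_nonneg (Finset.sum_nonneg fun _ _ => integral_nonneg fun _ => abs_nonneg _) dist_nonneg)

lemma bddAbove_range_LPMD (k l : Fin p → ℝ) : BddAbove (range fun z : Z => LPMD μ X z k l) :=
  ⟨_, forall_mem_range.2 fun z => (le_abs_self _).trans (abs_LPMD_le hX z k l)⟩

lemma lipschitzWith_iSup_LPMD (l : Fin p → ℝ) :
    LipschitzWith (∑ i, ∫ ω, |X ω i| ∂μ).toNNReal fun k => ⨆ z : Z, LPMD μ X z k l :=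
  LipschitzWith.ciSup
    (fun z => LipschitzWith.of_dist_le' fun k k' => by
      rw [Real.dist_eq, LPMD_sub_LPMD]
      exact abs_LPMD_le hX z k k')
    (bddAbove_range_LPMD hX Z · l)

variable {K : Set (Fin p → ℝ)} (hK : IsCompact K) (hKne : K.Nonempty)
include hK hKne

lemma exists_mem_iInf_iSup_LPMD_eq (l : Fin p → ℝ) :
    ∃ k ∈ K, ⨅ k' : K, ⨆ z : Z, LPMD μ X z k' l = ⨆ z : Z, LPMD μ X z k l := by
  obtain ⟨k, hk, hmin⟩ :=
    hK.exists_isMinOn hKne (lipschitzWith_iSup_LPMD hX Z l).continuous.continuousOn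
  exact ⟨k, hk, hmin.iInf_eq hk⟩

lemma bddAbove_range_iInf_iSup_LPMD {S : Set (Fin p → ℝ)} (hS : IsBounded S) (hKS : K ⊆ S) :
    BddAbove (range fun l : S => ⨅ k : K, ⨆ z : Z, LPMD μ X z k l) := by
  refine ⟨(∑ i, ∫ ω, |X ω i| ∂μ) * diam S, forall_mem_range.2 fun l => ?_⟩
  obtain ⟨k, hk, heq⟩ := exists_mem_iInf_iSup_LPMD_eq hX Z hK hKne l
  rw [heq]
  exact (iSup_LPMD_le hX Z k l).trans <| mul_le_mul_of_nonneg_left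
    (dist_le_diam_of_mem hS (hKS hk) l.2)
    (Finset.sum_nonneg fun _ _ => integral_nonneg fun _ => abs_nonneg _)

end LPMD

theorem sparse_ssd_stmt4_general
    {Ω : Type*} [MeasurableSpace Ω] (ℙ : Measure Ω) [IsProbabilityMeasure ℙ]
    {p : ℕ}
    (X : Ω → Fin p → ℝ)
    (hXint : ∀ i, Integrable (fun ω => X ω i) ℙ)
    (Z : Set ℝ)
    (K : Set (Fin p → ℝ)) (hKne : K.Nonempty) (hKcl : IsClosed K)
    (hKsub : K ⊆ stdSimplex ℝ (Fin p)) :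
    (∀ l ∈ stdSimplex ℝ (Fin p), ∃ k ∈ K, ∀ z ∈ Z, LPMD ℙ X z k l ≤ 0) ↔
      (⨆ l : stdSimplex ℝ (Fin p), ⨅ k : K, ⨆ z : Z, LPMD ℙ X (↑z) (↑k) (↑l)) ≤ 0 := by
  have hΛ : IsCompact (stdSimplex ℝ (Fin p)) := isCompact_stdSimplex ℝ (Fin p)
  have hK : IsCompact K := hΛ.of_isClosed_subset hKcl hKsub
  constructor
  · intro h
    refine Real.iSup_nonpos fun l => Real.iInf_nonpos' ?_
    obtain ⟨k, hk, hdom⟩ := h l l.2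
    exact ⟨⟨k, hk⟩, Real.iSup_nonpos fun z => hdom z z.2⟩
  · intro h l hl
    obtain ⟨k, hk, heq⟩ := exists_mem_iInf_iSup_LPMD_eq hXint Z hK hKne l
    have hsup : ⨆ z : Z, LPMD ℙ X z k l ≤ 0 := heq ▸
      (le_ciSup (bddAbove_range_iInf_iSup_LPMD hXint Z hK hKne hΛ.isBounded hKsub) ⟨l, hl⟩).trans h
    exact ⟨k, hk, fun z hz => (le_ciSup (bddAbove_range_LPMD hXint Z k l) ⟨z, hz⟩).trans hsup⟩

/-- **Lemma 1.** `K ⪰_SSD Λ` iff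
`sup_{λ ∈ Λ} inf_{κ ∈ K} sup_{z ∈ Z} D(z, κ, λ, ℙ) ≤ 0`. -/
theorem sparse_ssd_stmt4
    {Ω : Type*} [MeasurableSpace Ω] (ℙ : Measure Ω) [IsProbabilityMeasure ℙ]
    {p : ℕ} (hp : 0 < p)
    (X : Ω → Fin p → ℝ) (hXmeas : Measurable X)
    (hXint : ∀ i, Integrable (fun ω => X ω i) ℙ)
    (Z : Set ℝ)
    (hZ : Z = closure (convexHull ℝ (⋃ i, measSupport (Measure.map (fun ω => X ω i) ℙ))))
    (hZne : Z.Nonempty) (hZbdd : BddBelow Z)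
    (K : Set (Fin p → ℝ)) (hKne : K.Nonempty) (hKcl : IsClosed K)
    (hKsub : K ⊆ stdSimplex ℝ (Fin p)) :
    (∀ l ∈ stdSimplex ℝ (Fin p), ∃ k ∈ K, ∀ z ∈ Z, LPMD ℙ X z k l ≤ 0) ↔
      (⨆ l : stdSimplex ℝ (Fin p), ⨅ k : K, ⨆ z : Z, LPMD ℙ X (↑z) (↑k) (↑l)) ≤ 0 :=
  sparse_ssd_stmt4_general ℙ X hXint Z K hKne hKcl hKsub
end

section
/- (Lemma 2, finite-dimensional part.) Under the stated assumptions, for fixed p and q with q < p, there exists a nonempty closed K ⊆ Λ with csupp(K) ≤ q such that K ⪰_SSD Λ if and only if inf_{K ∈ L_{p,q}} sup_{λ ∈ Λ} inf_{κ ∈ K} sup_{z ∈ Z} D(z, κ, λ, ℙ) ≤ 0. -/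
open MeasureTheory

/-- `csupp K`: the number of coordinates used by some portfolio in `K`. -/
noncomputable def csupp {p : ℕ} (K : Set (Fin p → ℝ)) : ℕ :=
  Set.ncard {i : Fin p | ∃ k ∈ K, k i ≠ 0}

/-- `L_{p,q}`: the collection of nonempty closed subsets of the simplex with
support of size at most `q`. -/
def sparseSets (p q : ℕ) : Set (Set (Fin p → ℝ)) :=
  {K | K ⊆ stdSimplex ℝ (Fin p) ∧ K.Nonempty ∧ IsClosed K ∧ csupp K ≤ q}

/-! The gap `κ ↦ sup_{z ∈ Z} D(z, κ, λ, ℙ)` is Lipschitz for the sup-norm, with constant `E‖X‖₁`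
uniformly in `λ`, so it is continuous and bounded on the simplex. Every `K ∈ L_{p,q}` lies in a face
`Λ_S = {κ ∈ Λ : κ_i = 0 for i ∉ S}` with `#S = q`, which is itself in `L_{p,q}`, and enlarging `K`
can only decrease `sup_λ inf_{κ ∈ K}` of the gap. So the infimum over `L_{p,q}` is a minimum over
the finitely many faces, and on a compact face the inner infimum is attained: a face achieving a
nonpositive value SSD-spans `Λ`. -/

open Finset Set

section MinimaxBounds

variable {ι E : Type*} {f : ι → E → ℝ} {M c : ℝ}

theorem iSup_iInf_le_iSup_iInf_of_subset {K K' : Set E} (hKK' : K ⊆ K') (hK : K.Nonempty)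
    (hf : ∀ l, ∀ k ∈ K', |f l k| ≤ M) :
    ⨆ l, ⨅ k : K', f l k ≤ ⨆ l, ⨅ k : K, f l k := by
  have : Nonempty K := hK.to_subtype
  obtain ⟨k₀, hk₀⟩ := hK
  have hbdd : ∀ (l) (L : Set E), L ⊆ K' → BddBelow (range fun k : L => f l k) :=
    fun l L hL => ⟨-M, by rintro _ ⟨k, rfl⟩; exact neg_le_of_abs_le (hf l k (hL k.2))⟩
  refine ciSup_mono ⟨M, ?_⟩ fun l => le_ciInf fun k => ciInf_le (hbdd l K' subset_rfl) ⟨k, hKK' k.2⟩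
  rintro _ ⟨l, rfl⟩
  exact (ciInf_le (hbdd l K hKK') ⟨k₀, hk₀⟩).trans (le_of_abs_le (hf l k₀ (hKK' hk₀)))

theorem IsCompact.exists_le_of_iSup_iInf_le [TopologicalSpace E] {K : Set E} (hK : IsCompact K)
    (hne : K.Nonempty) (hcont : ∀ l, ContinuousOn (f l) K) (hf : ∀ l, ∀ k ∈ K, f l k ≤ M)
    (h : ⨆ l, ⨅ k : K, f l k ≤ c) (l : ι) : ∃ k ∈ K, f l k ≤ c := by
  have : Nonempty K := hne.to_subtype
  have hargmin : ∀ l, ∃ k₀ ∈ K, ∀ k : K, f l k₀ ≤ f l k := fun l =>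
    let ⟨k₀, hk₀, hmin⟩ := hK.exists_isMinOn hne (hcont l)
    ⟨k₀, hk₀, fun k => hmin k.2⟩
  have hbdd : BddAbove (range fun l => ⨅ k : K, f l k) := by
    refine ⟨M, ?_⟩
    rintro _ ⟨l, rfl⟩
    obtain ⟨k₀, hk₀, hmin⟩ := hargmin l
    exact (ciInf_le ⟨f l k₀, by rintro _ ⟨k, rfl⟩; exact hmin k⟩ ⟨k₀, hk₀⟩).trans (hf l k₀ hk₀)
  obtain ⟨k₀, hk₀, hmin⟩ := hargmin l
  exact ⟨k₀, hk₀, (le_ciInf hmin).trans ((le_ciSup hbdd l).trans h)⟩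

end MinimaxBounds

section SimplexFace

variable {ι : Type*} [Fintype ι]

def simplexFace (S : Finset ι) : Set (ι → ℝ) :=
  {x ∈ stdSimplex ℝ ι | ∀ i ∉ S, x i = 0}

theorem simplexFace_subset_stdSimplex (S : Finset ι) : simplexFace S ⊆ stdSimplex ℝ ι :=
  sep_subset _ _

theorem isClosed_simplexFace (S : Finset ι) : IsClosed (simplexFace S) := by
  refine (isClosed_stdSimplex ℝ ι).inter (?_ : IsClosed {x : ι → ℝ | ∀ i ∉ S, x i = 0})
  simp only [ofPred_forall]
  exact isClosed_iInter fun i => isClosed_iInter fun _ =>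
    isClosed_eq (continuous_apply i) continuous_const

theorem isCompact_simplexFace (S : Finset ι) : IsCompact (simplexFace S) :=
  (isCompact_stdSimplex ℝ ι).of_isClosed_subset (isClosed_simplexFace S)
    (simplexFace_subset_stdSimplex S)

theorem simplexFace_nonempty [DecidableEq ι] {S : Finset ι} (hS : S.Nonempty) :
    (simplexFace S).Nonempty := by
  obtain ⟨i, hi⟩ := hS
  exact ⟨Pi.single i 1, single_mem_stdSimplex ℝ i, fun j hj =>
    Pi.single_eq_of_ne (ne_of_mem_of_not_mem hi hj).symm 1⟩

end SimplexFace

section SparseSets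

variable {p q : ℕ}

theorem csupp_simplexFace_le (S : Finset (Fin p)) : csupp (simplexFace S) ≤ S.card := by
  have hsub : {i : Fin p | ∃ k ∈ simplexFace S, k i ≠ 0} ⊆ S := by
    rintro i ⟨k, hk, hki⟩
    by_contra hiS
    exact hki (hk.2 i hiS)
  exact (ncard_le_ncard hsub S.finite_toSet).trans (ncard_coe_finset S).le

theorem simplexFace_mem_sparseSets (hq : 0 < q) {S : Finset (Fin p)} (hS : S.card = q) :
    simplexFace S ∈ sparseSets p q :=
  ⟨simplexFace_subset_stdSimplex S, simplexFace_nonempty (card_pos.mp (hS ▸ hq)),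
    isClosed_simplexFace S, hS ▸ csupp_simplexFace_le S⟩

theorem exists_subset_simplexFace_of_mem_sparseSets (hqp : q ≤ p) {K : Set (Fin p → ℝ)}
    (hK : K ∈ sparseSets p q) : ∃ S : Finset (Fin p), S.card = q ∧ K ⊆ simplexFace S := by
  classical
  let T := {i : Fin p | ∃ k ∈ K, k i ≠ 0}.toFinset
  have hT : T.card ≤ q := by rw [← ncard_eq_toFinset_card']; exact hK.2.2.2
  obtain ⟨S, hTS, hS⟩ := exists_superset_card_eq hT (by simpa using hqp)
  refine ⟨S, hS, fun k hk => ⟨hK.1 hk, fun i hi => ?_⟩⟩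
  by_contra hki
  exact hi (hTS (mem_toFinset.mpr ⟨k, hk, hki⟩))

theorem exists_simplexFace_le_iInf_sparseSets {ι : Type*} {f : ι → (Fin p → ℝ) → ℝ} {M : ℝ}
    (hq : 0 < q) (hqp : q ≤ p) (hf : ∀ l, ∀ k ∈ stdSimplex ℝ (Fin p), |f l k| ≤ M) :
    ∃ S : Finset (Fin p), S.card = q ∧
      ⨆ l, ⨅ k : simplexFace S, f l k ≤ ⨅ K : sparseSets p q, ⨆ l, ⨅ k : K.1, f l k := by
  have : Nonempty {S : Finset (Fin p) // S.card = q} := by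
    obtain ⟨S, -, hS⟩ :=
      Finset.exists_subset_card_eq (s := (univ : Finset (Fin p))) (by simpa using hqp)
    exact ⟨⟨S, hS⟩⟩
  obtain ⟨⟨S, hS⟩, hmin⟩ := exists_eq_ciInf_of_finite
    (f := fun S : {S : Finset (Fin p) // S.card = q} => ⨆ l, ⨅ k : simplexFace S.1, f l k)
  have : Nonempty (sparseSets p q) := ⟨⟨_, simplexFace_mem_sparseSets hq hS⟩⟩
  refine ⟨S, hS, le_ciInf fun ⟨K, hK⟩ => ?_⟩
  obtain ⟨S', hS', hKS'⟩ := exists_subset_simplexFace_of_mem_sparseSets hqp hK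
  rw [hmin]
  exact (ciInf_le (finite_range _).bddBelow ⟨S', hS'⟩).trans
    (iSup_iInf_le_iSup_iInf_of_subset hKS' hK.2.1
      fun l k hk => hf l k (simplexFace_subset_stdSimplex S' hk))

end SparseSets

theorem abs_sum_mul_sub_sum_mul_le {ι : Type*} [Fintype ι] (k k' x : ι → ℝ) :
    |∑ i, k i * x i - ∑ i, k' i * x i| ≤ dist k k' * ∑ i, |x i| := by
  rw [← sum_sub_distrib, mul_sum]
  refine (abs_sum_le_sum_abs _ _).trans (sum_le_sum fun i _ => ?_)
  rw [← sub_mul, abs_mul, ← Real.dist_eq]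
  exact mul_le_mul_of_nonneg_right (dist_le_pi_dist k k' i) (abs_nonneg _)

section Gap

variable {Ω : Type*} [MeasurableSpace Ω] (ℙ : Measure Ω) [IsFiniteMeasure ℙ] {p : ℕ}
  (X : Ω → Fin p → ℝ) (Z : Set ℝ)

theorem abs_integral_posPart_sub_le (hX : ∀ i, Integrable (fun ω => X ω i) ℙ)
    (z : ℝ) (k k' : Fin p → ℝ) :
    |(∫ ω, max (z - ∑ i, k i * X ω i) 0 ∂ℙ) - ∫ ω, max (z - ∑ i, k' i * X ω i) 0 ∂ℙ|
      ≤ (∫ ω, ∑ i, |X ω i| ∂ℙ) * dist k k' := by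
  have hint : ∀ k : Fin p → ℝ, Integrable (fun ω => max (z - ∑ i, k i * X ω i) 0) ℙ := fun k =>
    ((integrable_const z).sub (integrable_finsetSum _ fun i _ => (hX i).const_mul (k i))).pos_part
  have hnorm : Integrable (fun ω => ∑ i, |X ω i|) ℙ := integrable_finsetSum _ fun i _ => (hX i).abs
  rw [← integral_sub (hint k) (hint k'), mul_comm, ← integral_const_mul]
  refine (abs_integral_le_integral_abs).trans
    (integral_mono ((hint k).sub (hint k')).abs (hnorm.const_mul _) fun ω => ?_)
  calc |max (z - ∑ i, k i * X ω i) 0 - max (z - ∑ i, k' i * X ω i) 0|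
      ≤ |(z - ∑ i, k i * X ω i) - (z - ∑ i, k' i * X ω i)| := abs_max_sub_max_le_abs _ _ _
    _ = |∑ i, k' i * X ω i - ∑ i, k i * X ω i| := by ring_nf
    _ ≤ dist k' k * ∑ i, |X ω i| := abs_sum_mul_sub_sum_mul_le k' k (X ω)
    _ = dist k k' * ∑ i, |X ω i| := by rw [dist_comm]

theorem lpmd_le_lpmd_add (hX : ∀ i, Integrable (fun ω => X ω i) ℙ) (z : ℝ) (k k' l : Fin p → ℝ) :
    LPMD ℙ X z k l ≤ LPMD ℙ X z k' l + (∫ ω, ∑ i, |X ω i| ∂ℙ) * dist k k' := by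
  have := (abs_le.mp (abs_integral_posPart_sub_le ℙ X hX z k k')).2
  unfold LPMD
  linarith

theorem lpmd_le_mul_dist (hX : ∀ i, Integrable (fun ω => X ω i) ℙ) (z : ℝ) (k l : Fin p → ℝ) :
    LPMD ℙ X z k l ≤ (∫ ω, ∑ i, |X ω i| ∂ℙ) * dist k l := by
  simpa [LPMD] using lpmd_le_lpmd_add ℙ X hX z k l l

/-- `ssdGap ℙ X Z κ λ = sup_{z ∈ Z} D(z, κ, λ, ℙ)`, which is `≤ 0` iff `κ ⪰_SSD λ`. -/
noncomputable def ssdGap (k l : Fin p → ℝ) : ℝ := ⨆ z : Z, LPMD ℙ X z k l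

variable {X Z}

theorem lpmd_le_ssdGap (hX : ∀ i, Integrable (fun ω => X ω i) ℙ) {z : ℝ} (hz : z ∈ Z)
    (k l : Fin p → ℝ) : LPMD ℙ X z k l ≤ ssdGap ℙ X Z k l :=
  le_ciSup (f := fun z : Z => LPMD ℙ X z k l)
    ⟨_, by rintro _ ⟨z, rfl⟩; exact lpmd_le_mul_dist ℙ X hX z k l⟩ ⟨z, hz⟩

theorem ssdGap_le_ssdGap_add (hX : ∀ i, Integrable (fun ω => X ω i) ℙ) (k k' l : Fin p → ℝ) :
    ssdGap ℙ X Z k l ≤ ssdGap ℙ X Z k' l + (∫ ω, ∑ i, |X ω i| ∂ℙ) * dist k k' := by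
  rcases isEmpty_or_nonempty Z with hZ | hZ
  · simp only [ssdGap, Real.iSup_of_isEmpty, zero_add]
    positivity
  · exact ciSup_le fun z => (lpmd_le_lpmd_add ℙ X hX z k k' l).trans
      (add_le_add_left (lpmd_le_ssdGap ℙ hX z.2 k' l) _)

theorem continuous_ssdGap_left (hX : ∀ i, Integrable (fun ω => X ω i) ℙ) (l : Fin p → ℝ) :
    Continuous fun k => ssdGap ℙ X Z k l :=
  (LipschitzWith.of_le_add_mul ⟨_, by positivity⟩
    fun k k' => ssdGap_le_ssdGap_add ℙ hX k k' l).continuous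

theorem abs_ssdGap_le (hX : ∀ i, Integrable (fun ω => X ω i) ℙ) (k l : Fin p → ℝ) :
    |ssdGap ℙ X Z k l| ≤ (∫ ω, ∑ i, |X ω i| ∂ℙ) * dist k l := by
  have hself : ssdGap ℙ X Z l l = 0 := by simp [ssdGap, LPMD]
  have h₁ := ssdGap_le_ssdGap_add ℙ (Z := Z) hX k l l
  have h₂ := ssdGap_le_ssdGap_add ℙ (Z := Z) hX l k l
  rw [hself, zero_add] at h₁
  rw [hself, dist_comm] at h₂
  exact abs_le.mpr ⟨by linarith, by linarith⟩

theorem exists_bound_abs_ssdGap (hX : ∀ i, Integrable (fun ω => X ω i) ℙ) :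
    ∃ M, ∀ k ∈ stdSimplex ℝ (Fin p), ∀ l ∈ stdSimplex ℝ (Fin p), |ssdGap ℙ X Z k l| ≤ M := by
  obtain ⟨D, hD⟩ := Metric.isBounded_iff.mp (isCompact_stdSimplex ℝ (Fin p)).isBounded
  exact ⟨_, fun k hk l hl => (abs_ssdGap_le ℙ hX k l).trans
    (mul_le_mul_of_nonneg_left (hD hk hl) (by positivity))⟩

end Gap

theorem sparse_ssd_stmt5_general
    {Ω : Type*} [MeasurableSpace Ω] (ℙ : Measure Ω) [IsProbabilityMeasure ℙ]
    {p q : ℕ} (hq : 0 < q) (hqp : q < p)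
    (X : Ω → Fin p → ℝ)
    (hXint : ∀ i, Integrable (fun ω => X ω i) ℙ)
    (Z : Set ℝ) :
    (∃ K ∈ sparseSets p q, ∀ l ∈ stdSimplex ℝ (Fin p), ∃ k ∈ K, ∀ z ∈ Z,
        LPMD ℙ X z k l ≤ 0) ↔
      (⨅ K : sparseSets p q, ⨆ l : stdSimplex ℝ (Fin p), ⨅ k : K.1, ⨆ z : Z,
        LPMD ℙ X (↑z) (↑k) (↑l)) ≤ 0 := by
  constructor
  · rintro ⟨K, hK, hspan⟩
    refine Real.iInf_nonpos' ⟨⟨K, hK⟩, Real.iSup_nonpos fun l => Real.iInf_nonpos' ?_⟩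
    obtain ⟨k, hk, hkl⟩ := hspan l l.2
    exact ⟨⟨k, hk⟩, Real.iSup_nonpos fun z => hkl z z.2⟩
  · intro h
    change ⨅ K : sparseSets p q, ⨆ l : stdSimplex ℝ (Fin p), ⨅ k : K.1,
      ssdGap ℙ X Z k l ≤ 0 at h
    obtain ⟨M, hM⟩ := exists_bound_abs_ssdGap ℙ (Z := Z) hXint
    let f (l : stdSimplex ℝ (Fin p)) (k : Fin p → ℝ) := ssdGap ℙ X Z k l
    obtain ⟨S, hS, hle⟩ := exists_simplexFace_le_iInf_sparseSets (f := f) hq hqp.le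
      fun l k hk => hM k hk l l.2
    refine ⟨simplexFace S, simplexFace_mem_sparseSets hq hS, fun l hl => ?_⟩
    obtain ⟨k, hk, hk₀⟩ := (isCompact_simplexFace S).exists_le_of_iSup_iInf_le (f := f)
      (simplexFace_nonempty (card_pos.mp (hS ▸ hq)))
      (fun l => (continuous_ssdGap_left ℙ hXint l).continuousOn)
      (fun l k hk => le_of_abs_le (hM k (simplexFace_subset_stdSimplex S hk) l l.2))
      (hle.trans h) ⟨l, hl⟩
    exact ⟨k, hk, fun z hz => (lpmd_le_ssdGap ℙ hXint hz k l).trans hk₀⟩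

/-- **Lemma 2, finite-dimensional part.** There exists a `q`-sparse
nonempty closed `K ⊆ Λ` SSD-spanning `Λ` iff
`inf_{K ∈ L_{p,q}} sup_{λ ∈ Λ} inf_{κ ∈ K} sup_{z ∈ Z} D(z, κ, λ, ℙ) ≤ 0`. -/
theorem sparse_ssd_stmt5
    {Ω : Type*} [MeasurableSpace Ω] (ℙ : Measure Ω) [IsProbabilityMeasure ℙ]
    {p q : ℕ} (hq : 0 < q) (hqp : q < p)
    (X : Ω → Fin p → ℝ) (hXmeas : Measurable X)
    (hXint : ∀ i, Integrable (fun ω => X ω i) ℙ)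
    (Z : Set ℝ)
    (hZ : Z = closure (convexHull ℝ (⋃ i, measSupport (Measure.map (fun ω => X ω i) ℙ))))
    (hZne : Z.Nonempty) (hZbdd : BddBelow Z) :
    (∃ K ∈ sparseSets p q, ∀ l ∈ stdSimplex ℝ (Fin p), ∃ k ∈ K, ∀ z ∈ Z,
        LPMD ℙ X z k l ≤ 0) ↔
      (⨅ K : sparseSets p q, ⨆ l : stdSimplex ℝ (Fin p), ⨅ k : K.1, ⨆ z : Z,
        LPMD ℙ X (↑z) (↑k) (↑l)) ≤ 0 :=
  sparse_ssd_stmt5_general ℙ hq hqp X hXint Z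
end

section
/- Let X : Ω → ℝᵖ be a random vector with E‖X‖ < ∞, z ∈ ℝ, and κ₀ ∈ ℝᵖ with ℙ(κ₀ᵀX = z) = 0. Then the convex function f(κ) := E[(z − κᵀX)₊] is differentiable at κ₀ with gradient ∇f(κ₀) = −E[X · 1{κ₀ᵀX ≤ z}], where (x)₊ := max(x, 0). -/
/-!
For almost every `ω` the ramp `k ↦ (z - ⟪k, X ω⟫)₊` is differentiable at `k₀`, since its kink
`⟪k₀, X ω⟫ = z` is a null event; off the kink its derivative is `-⟪X ω, ·⟫` or `0` according to
the side of `z` on which `⟪k₀, X ω⟫` lies. Each ramp is `‖X ω‖`-Lipschitz in `k` and `‖X‖` is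
integrable, so dominated convergence lets us differentiate under the integral.
-/

open MeasureTheory Filter
open scoped RealInnerProductSpace

theorem HasFDerivAt.max_zero_of_ne {E : Type*} [NormedAddCommGroup E] [NormedSpace ℝ E]
    {f : E → ℝ} {f' : E →L[ℝ] ℝ} {x : E} (hf : HasFDerivAt f f' x) (hx : f x ≠ 0) :
    HasFDerivAt (fun y => max (f y) 0) (if 0 ≤ f x then f' else 0) x := by
  rcases hx.lt_or_gt with hneg | hpos
  · rw [if_neg hneg.not_ge]
    refine (hasFDerivAt_const 0 x).congr_of_eventuallyEq ?_
    filter_upwards [hf.continuousAt.eventually (gt_mem_nhds hneg)] with y hy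
    exact max_eq_right hy.le
  · rw [if_pos hpos.le]
    refine hf.congr_of_eventuallyEq ?_
    filter_upwards [hf.continuousAt.eventually (lt_mem_nhds hpos)] with y hy
    exact max_eq_left hy.le

section InnerProductSpace

variable {E : Type*} [NormedAddCommGroup E] [InnerProductSpace ℝ E]

theorem hasFDerivAt_max_sub_inner (z : ℝ) {x k₀ : E} (h : ⟪k₀, x⟫ ≠ z) :
    HasFDerivAt (fun k => max (z - ⟪k, x⟫) 0)
      (if ⟪k₀, x⟫ ≤ z then -innerSL ℝ x else 0) k₀ := by
  have hlin : HasFDerivAt (fun k => z - ⟪k, x⟫) (-innerSL ℝ x) k₀ := by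
    simpa only [innerSL_apply_apply, real_inner_comm x] using
      (innerSL ℝ x).hasFDerivAt.const_sub z
  simpa only [sub_nonneg] using hlin.max_zero_of_ne (sub_ne_zero.mpr h.symm)

theorem lipschitzWith_max_sub_inner (z : ℝ) (x : E) :
    LipschitzWith ‖x‖₊ fun k : E => max (z - ⟪k, x⟫) 0 := by
  have hnorm : ‖innerSL ℝ x‖₊ = ‖x‖₊ := NNReal.eq (innerSL_apply_norm ℝ x)
  simpa only [zero_add, hnorm, innerSL_apply_apply, real_inner_comm x] using
    ((LipschitzWith.const z).sub (innerSL ℝ x).lipschitz).max_const 0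

theorem hasGradientAt_integral_max_sub_inner [CompleteSpace E] {Ω : Type*} [MeasurableSpace Ω]
    {μ : Measure Ω} [IsFiniteMeasure μ] {X : Ω → E} (hX : Integrable X μ) {z : ℝ} {k₀ : E}
    (hz : μ {ω | ⟪k₀, X ω⟫ = z} = 0) :
    HasGradientAt (fun k => ∫ ω, max (z - ⟪k, X ω⟫) 0 ∂μ)
      (-∫ ω in {ω | ⟪k₀, X ω⟫ ≤ z}, X ω ∂μ) k₀ := by
  set S := {ω | ⟪k₀, X ω⟫ ≤ z}
  have hS : NullMeasurableSet S μ :=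
    nullMeasurableSet_le (hX.const_inner k₀).aemeasurable aemeasurable_const
  have hint (k : E) : Integrable (fun ω => max (z - ⟪k, X ω⟫) 0) μ :=
    ((integrable_const z).sub (hX.const_inner k)).pos_part
  have hdiff : ∀ᵐ ω ∂μ, HasFDerivAt (fun k => max (z - ⟪k, X ω⟫) 0)
      (S.indicator (fun ω => -innerSL ℝ (X ω)) ω) k₀ := by
    filter_upwards [measure_eq_zero_iff_ae_notMem.mp hz] with ω hω
    simpa only [Set.indicator_apply, S, Set.mem_ofPred_eq] using hasFDerivAt_max_sub_inner z hω
  obtain ⟨-, hF⟩ := hasFDerivAt_integral_of_dominated_loc_of_lip (bound := fun ω => ‖X ω‖)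
    (F' := S.indicator fun ω => -innerSL ℝ (X ω))
    univ_mem (Eventually.of_forall fun k => (hint k).aestronglyMeasurable) (hint k₀)
    (((innerSL ℝ).continuous.comp_aestronglyMeasurable hX.aestronglyMeasurable).neg.indicator₀ hS)
    (Eventually.of_forall fun ω => by
      simpa only [Real.nnabs_of_nonneg (norm_nonneg _), norm_toNNReal, lipschitzOnWith_univ] using
        lipschitzWith_max_sub_inner z (X ω))
    hX.norm hdiff
  have hgrad : ∫ ω, S.indicator (fun ω => -innerSL ℝ (X ω)) ω ∂μ
      = InnerProductSpace.toDual ℝ E (-∫ ω in S, X ω ∂μ) := by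
    rw [integral_indicator₀ hS, integral_neg, map_neg,
      (innerSL ℝ).integral_comp_comm hX.restrict]
    rfl
  exact hasGradientAt_iff_hasFDerivAt.mpr (hgrad ▸ hF)

end InnerProductSpace

/-- If `E‖X‖ < ∞` and the portfolio return `κ₀ᵀX` puts no mass at the
threshold `z`, then the convex function `κ ↦ E[(z − κᵀX)₊]` is differentiable at `κ₀`
with gradient `−E[X · 1{κ₀ᵀX ≤ z}]`. -/
theorem sparse_ssd_stmt12
    {Ω : Type*} [MeasurableSpace Ω] (ℙ : Measure Ω) [IsProbabilityMeasure ℙ]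
    {p : ℕ} (X : Ω → EuclideanSpace ℝ (Fin p)) (hXmeas : Measurable X)
    (hXint : Integrable (fun ω => ‖X ω‖) ℙ)
    (z : ℝ) (k₀ : EuclideanSpace ℝ (Fin p))
    (hz : ℙ {ω | ⟪k₀, X ω⟫ = z} = 0) :
    HasGradientAt (fun k : EuclideanSpace ℝ (Fin p) => ∫ ω, max (z - ⟪k, X ω⟫) 0 ∂ℙ)
      (-(∫ ω in {ω | ⟪k₀, X ω⟫ ≤ z}, X ω ∂ℙ)) k₀ :=
  hasGradientAt_integral_max_sub_inner
    ((integrable_norm_iff hXmeas.aestronglyMeasurable).mp hXint) hz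
end
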